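/- arXiv:math/9805144 — 3 statements merged into one kernel-verified Lean document; each statement's English description precedes it below -/
import Mathlib

section
/- Let Re(α) > 0, σ > 0, η ∈ ℂ, and let f be a continuous function with compact support in (0,∞) satisfying f ∈ L_{ν,1} with ν < σ(1 + Re(η)). Then the Erdélyi–Kober integral (I^α_{0+;σ,η} f)(x) = (σ x^{−σ(α+η)}/Γ(α)) ∫₀^x (x^σ − t^σ)^{α−1} t^{ση+σ−1} f(t) dt satisfies, for Re(s) = ν, (𝔐 I^α_{0+;σ,η} f)(s) = [Γ(1 + η − s/σ)/Γ(1 + η + α − s/σ)] (𝔐 f)(s). -/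
open MeasureTheory Set

noncomputable def MellinT (f : ℝ → ℂ) (s : ℂ) : ℂ :=
  ∫ t in Set.Ioi (0 : ℝ), f t * (t : ℂ) ^ (s - 1)

noncomputable def EK0 (σ : ℝ) (α η : ℂ) (f : ℝ → ℂ) : ℝ → ℂ := fun x =>
  (σ : ℂ) * (x : ℂ) ^ (-(σ : ℂ) * (α + η)) / Complex.Gamma α *
    ∫ t in Set.Ioo (0 : ℝ) x,
      ((x ^ σ - t ^ σ : ℝ) : ℂ) ^ (α - 1) * (t : ℂ) ^ ((σ : ℂ) * η + (σ : ℂ) - 1) * f t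

lemma EK_sub (σ : ℝ) (hσ : 0 < σ) (α η : ℂ) (f : ℝ → ℂ) {x : ℝ} (hx : 0 < x) :
    EK0 σ α η f x = (Complex.Gamma α)⁻¹ *
      ∫ w in Ioo (0:ℝ) 1, ((1 - w : ℝ) : ℂ) ^ (α - 1) * (w : ℂ) ^ η * f (x * w ^ (1/σ)) := by
  have hσ' : σ ≠ 0 := hσ.ne'
  have hxne : x ≠ 0 := hx.ne'
  have himg : (fun w : ℝ => x * w ^ (1/σ)) '' Ioo 0 1 = Ioo 0 x := by
    ext y
    constructor
    · rintro ⟨w, ⟨hw0, hw1⟩, rfl⟩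
      constructor
      · positivity
      · nlinarith [Real.rpow_lt_one hw0.le hw1 (by positivity : (0:ℝ) < 1/σ),
          Real.rpow_pos_of_pos hw0 (1/σ)]
    · rintro ⟨hy0, hyx⟩
      refine ⟨(y/x) ^ σ, ⟨Real.rpow_pos_of_pos (by positivity) σ,
        Real.rpow_lt_one (by positivity) (by rwa [div_lt_one hx]) hσ⟩, ?_⟩
      show x * ((y/x) ^ σ) ^ (1/σ) = y
      rw [← Real.rpow_mul (by positivity), mul_one_div_cancel hσ', Real.rpow_one,
        mul_div_cancel₀ _ hxne]
  have hderiv : ∀ w ∈ Ioo (0:ℝ) 1, HasDerivWithinAt (fun w : ℝ => x * w ^ (1/σ))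
      (x * ((1/σ) * w ^ (1/σ - 1))) (Ioo 0 1) w := by
    intro w hw
    exact ((Real.hasDerivAt_rpow_const (Or.inl hw.1.ne')).const_mul x).hasDerivWithinAt
  have hinj : InjOn (fun w : ℝ => x * w ^ (1/σ)) (Ioo 0 1) := by
    intro a ha b hb hab
    have := mul_left_cancel₀ hxne hab
    have h2 := congrArg (fun r : ℝ => r ^ σ) this
    simpa [← Real.rpow_mul ha.1.le, ← Real.rpow_mul hb.1.le,
      one_div_mul_cancel hσ', inv_mul_cancel₀ hσ'] using h2
  have key := integral_image_eq_integral_abs_deriv_smul (f := fun w : ℝ => x * w ^ (1/σ))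
      (f' := fun w : ℝ => x * ((1/σ) * w ^ (1/σ - 1))) measurableSet_Ioo hderiv hinj
      (fun t => ((x ^ σ - t ^ σ : ℝ) : ℂ) ^ (α - 1) * (t : ℂ) ^ ((σ : ℂ) * η + (σ : ℂ) - 1) * f t)
  rw [himg] at key
  rw [EK0, key]
  have hpt : ∀ w ∈ Ioo (0:ℝ) 1,
      |x * (1/σ * w ^ (1/σ - 1))| •
        (((x ^ σ - (x * w ^ (1/σ)) ^ σ : ℝ) : ℂ) ^ (α - 1) *
          ((x * w ^ (1/σ) : ℝ) : ℂ) ^ ((σ : ℂ) * η + (σ : ℂ) - 1) * f (x * w ^ (1/σ)))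
      = ((x : ℂ) ^ ((σ : ℂ) * (α + η)) / σ) *
          (((1 - w : ℝ) : ℂ) ^ (α - 1) * (w : ℂ) ^ η * f (x * w ^ (1/σ))) := by
    intro w hw
    obtain ⟨hw0, hw1⟩ := hw
    have hwne : w ≠ 0 := hw0.ne'
    have hWne : (w : ℂ) ≠ 0 := Complex.ofReal_ne_zero.2 hwne
    have hXne : (x : ℂ) ≠ 0 := Complex.ofReal_ne_zero.2 hxne
    have habs : |x * (1/σ * w ^ (1/σ - 1))| = x * (1/σ) * w ^ (1/σ - 1) := by
      rw [abs_of_pos]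
      · ring
      · positivity
    have hpow : (x * w ^ (1/σ)) ^ σ = x ^ σ * w := by
      rw [Real.mul_rpow hx.le (Real.rpow_nonneg hw0.le _), ← Real.rpow_mul hw0.le,
        one_div_mul_cancel hσ', Real.rpow_one]
    have hsub : x ^ σ - (x * w ^ (1/σ)) ^ σ = x ^ σ * (1 - w) := by rw [hpow]; ring
    rw [habs, hsub]
    have e1 : ((x ^ σ * (1 - w) : ℝ) : ℂ) ^ (α - 1)
        = (x:ℂ) ^ ((σ:ℂ) * (α - 1)) * ((1 - w : ℝ):ℂ) ^ (α - 1) := by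
      rw [Complex.ofReal_mul, Complex.mul_cpow_ofReal_nonneg (Real.rpow_nonneg hx.le σ)
        (by linarith), ← Complex.cpow_mul_ofReal_nonneg hx.le]
    have e2 : ((x * w ^ (1/σ) : ℝ) : ℂ) ^ ((σ:ℂ) * η + (σ:ℂ) - 1)
        = (x:ℂ) ^ ((σ:ℂ) * η + (σ:ℂ) - 1) *
          (w:ℂ) ^ (((1/σ : ℝ):ℂ) * ((σ:ℂ) * η + (σ:ℂ) - 1)) := by
      rw [Complex.ofReal_mul, Complex.mul_cpow_ofReal_nonneg hx.le
        (Real.rpow_nonneg hw0.le _), ← Complex.cpow_mul_ofReal_nonneg hw0.le]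
    have e3 : ((x * (1/σ) * w ^ (1/σ - 1) : ℝ) : ℂ)
        = (x:ℂ) * ((σ:ℂ))⁻¹ * (w:ℂ) ^ (((1/σ - 1 : ℝ)):ℂ) := by
      rw [Complex.ofReal_mul, Complex.ofReal_mul, Complex.ofReal_cpow hw0.le]
      push_cast
      ring
    have hxcomb : (x:ℂ) * ((x:ℂ) ^ ((σ:ℂ) * (α - 1)) * (x:ℂ) ^ ((σ:ℂ) * η + (σ:ℂ) - 1))
        = (x:ℂ) ^ ((σ:ℂ) * (α + η)) := by
      rw [show (σ:ℂ) * (α + η) = 1 + ((σ:ℂ) * (α - 1) + ((σ:ℂ) * η + (σ:ℂ) - 1)) by ring,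
        Complex.cpow_add _ _ hXne, Complex.cpow_add _ _ hXne, Complex.cpow_one]
    have hwcomb : (w:ℂ) ^ (((1/σ - 1 : ℝ)):ℂ) *
        (w:ℂ) ^ (((1/σ : ℝ):ℂ) * ((σ:ℂ) * η + (σ:ℂ) - 1)) = (w:ℂ) ^ η := by
      rw [← Complex.cpow_add _ _ hWne]
      congr 1
      have : ((σ:ℂ)) ≠ 0 := Complex.ofReal_ne_zero.2 hσ'
      push_cast
      field_simp
      ring
    rw [Complex.real_smul, e1, e2, e3, ← hxcomb, ← hwcomb]
    push_cast
    ring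
  rw [setIntegral_congr_fun measurableSet_Ioo hpt, integral_const_mul]
  have hne : (x : ℂ) ^ ((σ : ℂ) * (α + η)) ≠ 0 := by
    intro h
    exact (Complex.ofReal_ne_zero.2 hxne) ((Complex.cpow_eq_zero_iff _ _).1 h).1
  rw [show -(σ:ℂ) * (α + η) = -((σ:ℂ) * (α + η)) by ring, Complex.cpow_neg]
  rcases eq_or_ne (Complex.Gamma α) 0 with h | h
  · simp [h]
  · field_simp [hne, h, Complex.ofReal_ne_zero.2 hσ']

lemma MellinT_eq_mellin (f : ℝ → ℂ) (s : ℂ) : MellinT f s = mellin f s := by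
  rw [MellinT, mellin]
  exact setIntegral_congr_fun measurableSet_Ioi fun t _ => by
    rw [smul_eq_mul, mul_comm]

lemma cont_mul_cpow {g : ℝ → ℂ} (hg : Continuous g) {ε : ℝ} (hε : 0 < ε)
    (h0 : ∀ y : ℝ, |y| < ε → g y = 0) (z : ℂ) :
    Continuous fun x : ℝ => g x * (x : ℂ) ^ z := by
  rw [continuous_iff_continuousAt]
  intro x
  rcases eq_or_ne x 0 with rfl | hx
  · have heq : (fun x : ℝ => g x * (x : ℂ) ^ z) =ᶠ[nhds 0] fun _ => 0 := by
      filter_upwards [Metric.ball_mem_nhds (0:ℝ) hε] with y hy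
      rw [h0 y (by simpa [Real.dist_eq] using hy), zero_mul]
    exact (continuousAt_const (y := (0:ℂ))).congr heq.symm
  · exact hg.continuousAt.mul (Complex.continuousAt_ofReal_cpow_const x z (Or.inr hx))

lemma exists_eps {f : ℝ → ℂ} (hpos : tsupport f ⊆ Set.Ioi 0) :
    ∃ ε : ℝ, 0 < ε ∧ ∀ y : ℝ, |y| < ε → f y = 0 := by
  have h0 : (0:ℝ) ∈ (tsupport f)ᶜ := fun h => by simpa using hpos h
  obtain ⟨ε, hε, hball⟩ := Metric.isOpen_iff.1 (isClosed_tsupport f).isOpen_compl 0 h0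
  exact ⟨ε, hε, fun y hy => image_eq_zero_of_notMem_tsupport
    (hball (by simpa [Real.dist_eq] using hy))⟩

lemma int_aux {f : ℝ → ℂ} (hcont : Continuous f) (hsupp : HasCompactSupport f)
    (hpos : tsupport f ⊆ Set.Ioi 0) {c : ℝ} (hc : 0 < c) (z : ℂ) :
    Integrable (fun x => f (c * x) * (x : ℂ) ^ z) (volume.restrict (Ioi 0)) := by
  obtain ⟨ε, hε, h0⟩ := exists_eps hpos
  have hgc : Continuous fun x : ℝ => f (c * x) := hcont.comp (continuous_const.mul continuous_id)
  have h0' : ∀ y : ℝ, |y| < ε / c → f (c * y) = 0 := by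
    intro y hy
    apply h0
    rw [abs_mul, abs_of_pos hc]
    calc c * |y| < c * (ε / c) := by gcongr
      _ = ε := by field_simp
  have hcontm : Continuous fun x : ℝ => f (c * x) * (x : ℂ) ^ z :=
    cont_mul_cpow hgc (by positivity) h0' z
  have hcs : HasCompactSupport fun x : ℝ => f (c * x) * (x : ℂ) ^ z := by
    have h1 : HasCompactSupport fun x : ℝ => f (c * x) := by
      simpa [smul_eq_mul] using hsupp.comp_smul (c := c) hc.ne'
    exact h1.mul_right
  exact (hcontm.integrable_of_hasCompactSupport hcs).integrableOn

lemma cv_real {f : ℝ → ℂ} {c : ℝ} (hc : 0 < c) (ν : ℝ) :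
    ∫ x in Ioi (0:ℝ), ‖f (c * x)‖ * x ^ (ν - 1) =
      c ^ (-ν) * ∫ y in Ioi (0:ℝ), ‖f y‖ * y ^ (ν - 1) := by
  have key := integral_comp_mul_left_Ioi (fun y => ‖f y‖ * (c⁻¹ * y) ^ (ν - 1)) 0 hc
  simp only [mul_zero, smul_eq_mul] at key
  have l1 : ∫ x in Ioi (0:ℝ), ‖f (c * x)‖ * x ^ (ν - 1)
      = ∫ x in Ioi (0:ℝ), ‖f (c * x)‖ * (c⁻¹ * (c * x)) ^ (ν - 1) := by
    refine setIntegral_congr_fun measurableSet_Ioi fun x _ => ?_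
    rw [inv_mul_cancel_left₀ hc.ne']
  have l2 : ∫ y in Ioi (0:ℝ), ‖f y‖ * (c⁻¹ * y) ^ (ν - 1)
      = c⁻¹ ^ (ν - 1) * ∫ y in Ioi (0:ℝ), ‖f y‖ * y ^ (ν - 1) := by
    rw [← integral_const_mul]
    refine setIntegral_congr_fun measurableSet_Ioi fun y hy => ?_
    rw [Real.mul_rpow (by positivity) (le_of_lt hy)]
    ring
  rw [l1, key, l2, Real.inv_rpow hc.le, ← Real.rpow_neg_one c, ← Real.rpow_neg hc.le,
    ← mul_assoc, ← Real.rpow_add hc]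
  ring_nf

/-- Mellin transform of the Erdélyi–Kober operator I^α_{0+;σ,η}:
(𝔐 I^α_{0+;σ,η} f)(s) = [Γ(1 + η − s/σ)/Γ(1 + η + α − s/σ)] (𝔐 f)(s)
for Re(s) = ν < σ(1 + Re η). -/
theorem stmt9 (σ ν : ℝ) (α η : ℂ) (hσ : 0 < σ) (hα : 0 < α.re)
    (f : ℝ → ℂ) (hcont : Continuous f) (hsupp : HasCompactSupport f)
    (hpos : tsupport f ⊆ Set.Ioi 0)
    (hL : (∫⁻ t in Set.Ioi (0 : ℝ),
        ENNReal.ofReal (t ^ ν * ‖f t‖ / t)) < ⊤)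
    (hν : ν < σ * (1 + η.re)) :
    ∀ s : ℂ, s.re = ν →
      MellinT (EK0 σ α η f) s =
        Complex.Gamma (1 + η - s / (σ : ℂ)) / Complex.Gamma (1 + η + α - s / (σ : ℂ)) *
          MellinT f s := by
  intro s hsre
  have hσ' : σ ≠ 0 := hσ.ne'
  have hΓα : Complex.Gamma α ≠ 0 := Complex.Gamma_ne_zero_of_re_pos hα
  set p : ℂ := 1 + η - s / (σ : ℂ) with hp
  have hsdiv : (s / (σ : ℂ)).re = ν / σ := by rw [Complex.div_ofReal_re, hsre]
  have hνσ : ν / σ < 1 + η.re := (div_lt_iff₀ hσ).2 (by linarith [hν])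
  have hpre : 0 < p.re := by
    simp only [hp, Complex.sub_re, Complex.add_re, Complex.one_re, hsdiv]
    linarith
  have hpα : 0 < (p + α).re := by
    rw [Complex.add_re]; linarith
  have hΓpα : Complex.Gamma (p + α) ≠ 0 := Complex.Gamma_ne_zero_of_re_pos hpα
  -- the two-variable integrand
  set F : ℝ → ℝ → ℂ := fun x w =>
    ((1 - w : ℝ) : ℂ) ^ (α - 1) * (w : ℂ) ^ η * f (x * w ^ (1/σ)) * (x : ℂ) ^ (s - 1)
    with hF
  -- Step 1 : express the Mellin transform as an iterated integral
  have step1 : MellinT (EK0 σ α η f) s =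
      (Complex.Gamma α)⁻¹ * ∫ x in Ioi (0:ℝ), ∫ w in Ioo (0:ℝ) 1, F x w := by
    rw [MellinT, ← integral_const_mul]
    refine setIntegral_congr_fun measurableSet_Ioi fun x hx => ?_
    rw [EK_sub σ hσ α η f hx, mul_assoc, ← integral_mul_const]
  -- Integrability on the product for Fubini
  have hInt : Integrable (Function.uncurry F)
      ((volume.restrict (Ioi (0:ℝ))).prod (volume.restrict (Ioo (0:ℝ) 1))) := by
    -- measurability
    have hS : MeasurableSet (Ioi (0:ℝ) ×ˢ Ioo (0:ℝ) 1) :=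
      measurableSet_Ioi.prod measurableSet_Ioo
    have hcF : ContinuousOn (Function.uncurry F) (Ioi (0:ℝ) ×ˢ Ioo (0:ℝ) 1) := by
      intro z hz
      have hx0 : (0:ℝ) < z.1 := hz.1
      have hw0 : (0:ℝ) < z.2 := hz.2.1
      have hw1 : z.2 < 1 := hz.2.2
      apply ContinuousAt.continuousWithinAt
      have c1 : ContinuousAt (fun z : ℝ × ℝ => ((1 - z.2 : ℝ) : ℂ) ^ (α - 1)) z := by
        have h1 := Complex.continuousAt_ofReal_cpow_const (1 - z.2) (α - 1)
          (Or.inr (by linarith))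
        have h2 : ContinuousAt (fun z : ℝ × ℝ => 1 - z.2) z :=
          (continuous_const.sub continuous_snd).continuousAt
        have h3 := ContinuousAt.comp (x := z) h1 h2
        exact h3
      have c2 : ContinuousAt (fun z : ℝ × ℝ => ((z.2 : ℝ) : ℂ) ^ η) z := by
        have := Complex.continuousAt_ofReal_cpow_const z.2 η (Or.inr hw0.ne')
        exact this.comp continuous_snd.continuousAt
      have c3 : ContinuousAt (fun z : ℝ × ℝ => f (z.1 * z.2 ^ (1/σ))) z := by
        apply hcont.continuousAt.comp
        exact continuous_fst.continuousAt.mul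
          ((Real.continuousAt_rpow_const z.2 (1/σ) (Or.inl hw0.ne')).comp
            continuous_snd.continuousAt)
      have c4 : ContinuousAt (fun z : ℝ × ℝ => ((z.1 : ℝ) : ℂ) ^ (s - 1)) z := by
        have := Complex.continuousAt_ofReal_cpow_const z.1 (s - 1) (Or.inr hx0.ne')
        exact this.comp continuous_fst.continuousAt
      exact ((c1.mul c2).mul c3).mul c4
    have hmeas : AEStronglyMeasurable (Function.uncurry F)
        ((volume.restrict (Ioi (0:ℝ))).prod (volume.restrict (Ioo (0:ℝ) 1))) := by
      rw [Measure.prod_restrict]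
      exact hcF.aestronglyMeasurable hS
    rw [integrable_prod_iff' hmeas]
    constructor
    · -- a.e. w, integrable in x
      filter_upwards [ae_restrict_mem measurableSet_Ioo] with w hw
      obtain ⟨hw0, hw1⟩ := hw
      have hcpos : 0 < w ^ (1/σ) := Real.rpow_pos_of_pos hw0 _
      have base := int_aux hcont hsupp hpos hcpos (s - 1)
      refine (base.const_mul (((1 - w : ℝ) : ℂ) ^ (α - 1) * (w : ℂ) ^ η)).congr
        (Filter.Eventually.of_forall fun x => ?_)
      simp only [Function.uncurry, hF]
      rw [mul_comm (w ^ (1/σ)) x]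
      ring
    · -- integrability of the norm integral in w
      set C : ℝ := ∫ x in Ioi (0:ℝ), ‖f x‖ * x ^ (ν - 1) with hC
      set N : ℝ → ℝ := fun w => (1 - w) ^ (α.re - 1) * w ^ (η.re - ν/σ) * C with hN
      -- N is integrable on Ioo 0 1
      have hNint : Integrable N (volume.restrict (Ioo (0:ℝ) 1)) := by
        have hbc := Complex.betaIntegral_convergent
          (u := ((η.re - ν/σ + 1 : ℝ) : ℂ)) (v := ((α.re : ℝ) : ℂ))
          (by simpa using by linarith [hνσ] : (0:ℝ) < η.re - ν/σ + 1)
          (by simpa using hα)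
        rw [intervalIntegrable_iff_integrableOn_Ioo_of_le zero_le_one] at hbc
        have hbn := hbc.norm.mul_const C
        refine hbn.congr (Filter.EventuallyEq.symm ?_)
        filter_upwards [ae_restrict_mem measurableSet_Ioo] with w hw
        obtain ⟨hw0, hw1⟩ := hw
        rw [hN]
        dsimp only
        simp only [norm_mul]
        rw [show ((1:ℂ) - (w:ℝ)) = (((1 - w : ℝ)) : ℂ) by push_cast; ring]
        rw [Complex.norm_cpow_eq_rpow_re_of_pos hw0,
          Complex.norm_cpow_eq_rpow_re_of_pos (by linarith : (0:ℝ) < 1 - w)]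
        simp only [Complex.sub_re, Complex.ofReal_re, Complex.one_re]
        ring
      -- the norm integral equals N a.e.
      refine hNint.congr ?_
      filter_upwards [ae_restrict_mem measurableSet_Ioo] with w hw
      obtain ⟨hw0, hw1⟩ := hw
      have hcpos : 0 < w ^ (1/σ) := Real.rpow_pos_of_pos hw0 _
      have hnorm : ∀ x ∈ Ioi (0:ℝ), ‖F x w‖ =
          ((1 - w) ^ (α.re - 1) * w ^ η.re) * (‖f (w ^ (1/σ) * x)‖ * x ^ (ν - 1)) := by
        intro x hx
        have hx0 : (0:ℝ) < x := hx
        rw [hF]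
        dsimp only
        simp only [norm_mul]
        rw [Complex.norm_cpow_eq_rpow_re_of_pos (by linarith : (0:ℝ) < 1 - w),
          Complex.norm_cpow_eq_rpow_re_of_pos hw0, Complex.norm_cpow_eq_rpow_re_of_pos hx0]
        rw [mul_comm x (w ^ (1/σ))]
        simp only [Complex.sub_re, Complex.ofReal_re, Complex.one_re, hsre]
        ring
      have : ∫ x in Ioi (0:ℝ), ‖F x w‖
          = ((1 - w) ^ (α.re - 1) * w ^ η.re) * ((w ^ (1/σ)) ^ (-ν) * C) := by
        rw [setIntegral_congr_fun measurableSet_Ioi hnorm, integral_const_mul,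
          cv_real hcpos ν]
      rw [show (fun x => ‖Function.uncurry F (x, w)‖) = fun x => ‖F x w‖ from rfl] at *
      rw [this]
      rw [hN]
      dsimp only
      rw [← Real.rpow_mul hw0.le,
        show η.re - ν/σ = η.re + (1/σ)*(-ν) by ring, Real.rpow_add hw0]
      ring
  have step2 : ∫ x in Ioi (0:ℝ), ∫ w in Ioo (0:ℝ) 1, F x w
      = ∫ w in Ioo (0:ℝ) 1, ∫ x in Ioi (0:ℝ), F x w :=
    integral_integral_swap hInt
  -- Step 3 : evaluate the inner integral for fixed w
  have step3 : ∀ w ∈ Ioo (0:ℝ) 1, ∫ x in Ioi (0:ℝ), F x w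
      = ((1 - w : ℝ) : ℂ) ^ (α - 1) * (w : ℂ) ^ (p - 1) * MellinT f s := by
    intro w hw
    obtain ⟨hw0, hw1⟩ := hw
    have hWne : (w : ℂ) ≠ 0 := Complex.ofReal_ne_zero.2 hw0.ne'
    have hcpos : 0 < w ^ (1/σ) := Real.rpow_pos_of_pos hw0 _
    have e1 : ∫ x in Ioi (0:ℝ), F x w
        = ((1 - w : ℝ) : ℂ) ^ (α - 1) * (w : ℂ) ^ η *
            ∫ x in Ioi (0:ℝ), f (w ^ (1/σ) * x) * (x : ℂ) ^ (s - 1) := by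
      rw [← integral_const_mul]
      refine setIntegral_congr_fun measurableSet_Ioi fun x _ => ?_
      rw [hF]
      dsimp only
      rw [mul_comm x (w ^ (1/σ))]
      ring
    have e2 : ∫ x in Ioi (0:ℝ), f (w ^ (1/σ) * x) * (x : ℂ) ^ (s - 1)
        = mellin (fun t => f (w ^ (1/σ) * t)) s := by
      rw [mellin]
      exact setIntegral_congr_fun measurableSet_Ioi fun t _ => by rw [smul_eq_mul, mul_comm]
    rw [e1, e2, mellin_comp_mul_left f s hcpos, ← MellinT_eq_mellin]
    rw [smul_eq_mul, ← Complex.cpow_mul_ofReal_nonneg hw0.le]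
    have e3 : (w : ℂ) ^ η * ((w : ℂ) ^ (((1/σ : ℝ) : ℂ) * (-s)) * MellinT f s)
        = (w : ℂ) ^ (p - 1) * MellinT f s := by
      rw [← mul_assoc, ← Complex.cpow_add _ _ hWne]
      congr 2
      rw [hp]
      push_cast
      have : ((σ : ℝ) : ℂ) ≠ 0 := Complex.ofReal_ne_zero.2 hσ'
      field_simp
      ring
    rw [mul_assoc, e3, mul_assoc]
  -- Step 4 : the beta integral
  have step4 : ∫ w in Ioo (0:ℝ) 1, ((1 - w : ℝ) : ℂ) ^ (α - 1) * (w : ℂ) ^ (p - 1)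
      = Complex.betaIntegral p α := by
    rw [Complex.betaIntegral, intervalIntegral.integral_of_le zero_le_one,
      MeasureTheory.integral_Ioc_eq_integral_Ioo]
    refine setIntegral_congr_fun measurableSet_Ioo fun w _ => ?_
    push_cast
    ring
  have hbeta : Complex.betaIntegral p α =
      Complex.Gamma p * Complex.Gamma α / Complex.Gamma (p + α) := by
    rw [eq_div_iff hΓpα, mul_comm (Complex.betaIntegral p α) _,
      ← Complex.Gamma_mul_Gamma_eq_betaIntegral hpre hα]
  -- Assemble
  rw [step1, step2]
  rw [setIntegral_congr_fun measurableSet_Ioo step3]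
  rw [show (fun w : ℝ => ((1 - w : ℝ) : ℂ) ^ (α - 1) * (w : ℂ) ^ (p - 1) * MellinT f s)
      = fun w : ℝ => (((1 - w : ℝ) : ℂ) ^ (α - 1) * (w : ℂ) ^ (p - 1)) * MellinT f s from rfl]
  rw [integral_mul_const, step4, hbeta]
  rw [show (1 + η + α - s / (σ : ℂ)) = p + α by rw [hp]; ring]
  field_simp
end

section
/- Let Re(α) > 0, σ > 0, η ∈ ℂ, and let f be a continuous function with compact support in (0,∞) satisfying ν > −σ Re(η). Then the Erdélyi–Kober integral (I^α_{−;σ,η} f)(x) = (σ x^{ση}/Γ(α)) ∫_x^∞ (t^σ − x^σ)^{α−1} t^{σ(1−α−η)−1} f(t) dt satisfies, for Re(s) = ν, (𝔐 I^α_{−;σ,η} f)(s) = [Γ(η + s/σ)/Γ(η + α + s/σ)] (𝔐 f)(s). -/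
open MeasureTheory Set

/-- The Erdélyi–Kober type fractional integral
(I^α_{−;σ,η} f)(x) = (σ x^{ση}/Γ(α)) ∫_x^∞ (t^σ − x^σ)^{α−1} t^{σ(1−α−η)−1} f(t) dt. -/
noncomputable def EKm (σ : ℝ) (α η : ℂ) (f : ℝ → ℂ) : ℝ → ℂ := fun x =>
  (σ : ℂ) * (x : ℂ) ^ ((σ : ℂ) * η) / Complex.Gamma α *
    ∫ t in Set.Ioi x,
      ((t ^ σ - x ^ σ : ℝ) : ℂ) ^ (α - 1) * (t : ℂ) ^ ((σ : ℂ) * (1 - α - η) - 1) * f t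

section Subst
variable {E : Type*} [NormedAddCommGroup E] [NormedSpace ℝ E]

lemma phi_hasDeriv (σ t : ℝ) {u : ℝ} (hu : u ∈ Ioo (0:ℝ) 1) :
    HasDerivWithinAt (fun u : ℝ => t * u ^ (1/σ)) (t * (1/σ * u ^ (1/σ - 1))) (Ioo 0 1) u :=
  ((Real.hasDerivAt_rpow_const (Or.inl hu.1.ne')).const_mul t).hasDerivWithinAt

lemma phi_inj (σ t : ℝ) (hσ : 0 < σ) (ht : 0 < t) :
    InjOn (fun u : ℝ => t * u ^ (1/σ)) (Ioo 0 1) := by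
  intro a ha b hb h
  simp only [] at h
  have h2 : a ^ (1/σ) = b ^ (1/σ) := by
    exact mul_left_cancel₀ ht.ne' h
  have : (a ^ (1/σ)) ^ σ = (b ^ (1/σ)) ^ σ := by rw [h2]
  rwa [← Real.rpow_mul ha.1.le, ← Real.rpow_mul hb.1.le, one_div_mul_cancel hσ.ne',
    Real.rpow_one, Real.rpow_one] at this

lemma phi_image (σ t : ℝ) (hσ : 0 < σ) (ht : 0 < t) :
    (fun u : ℝ => t * u ^ (1/σ)) '' (Ioo 0 1) = Ioo 0 t := by
  ext x
  constructor
  · rintro ⟨u, hu, rfl⟩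
    refine ⟨mul_pos ht (Real.rpow_pos_of_pos hu.1 _), ?_⟩
    have : u ^ (1/σ) < 1 := Real.rpow_lt_one hu.1.le hu.2 (by positivity)
    nlinarith
  · rintro ⟨hx0, hxt⟩
    refine ⟨(x/t) ^ σ, ⟨Real.rpow_pos_of_pos (by positivity) _,
      Real.rpow_lt_one (by positivity) (by rw [div_lt_one ht]; exact hxt) hσ⟩, ?_⟩
    simp only [← Real.rpow_mul (by positivity : (0:ℝ) ≤ x/t), mul_one_div_cancel hσ.ne',
      Real.rpow_one]
    field_simp

lemma subst_eq (σ t : ℝ) (hσ : 0 < σ) (ht : 0 < t) (g : ℝ → E) :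
    ∫ x in Ioo 0 t, g x
      = ∫ u in Ioo (0:ℝ) 1, |t * (1/σ * u ^ (1/σ - 1))| • g (t * u ^ (1/σ)) := by
  rw [← phi_image σ t hσ ht,
    integral_image_eq_integral_abs_deriv_smul measurableSet_Ioo
      (fun u hu => phi_hasDeriv σ t hu) (phi_inj σ t hσ ht) g]

lemma subst_int (σ t : ℝ) (hσ : 0 < σ) (ht : 0 < t) (g : ℝ → E) :
    IntegrableOn g (Ioo 0 t) ↔
      IntegrableOn (fun u => |t * (1/σ * u ^ (1/σ - 1))| • g (t * u ^ (1/σ))) (Ioo (0:ℝ) 1) := by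
  rw [← phi_image σ t hσ ht,
    integrableOn_image_iff_integrableOn_abs_deriv_smul measurableSet_Ioo
      (fun u hu => phi_hasDeriv σ t hu) (phi_inj σ t hσ ht) g]

end Subst

lemma key_simp (σ t : ℝ) (hσ : 0 < σ) (ht : 0 < t) (p α : ℂ) {u : ℝ}
    (hu : u ∈ Ioo (0:ℝ) 1) :
    |t * (1/σ * u ^ (1/σ - 1))| •
        (((t * u ^ (1/σ) : ℝ) : ℂ) ^ (p - 1) *
          ((t ^ σ - (t * u ^ (1/σ)) ^ σ : ℝ) : ℂ) ^ (α - 1))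
      = ((t/σ : ℝ) : ℂ) * (t : ℂ) ^ (p - 1) * ((t ^ σ : ℝ) : ℂ) ^ (α - 1) *
          ((u : ℂ) ^ (p/(σ:ℂ) - 1) * ((1 - u : ℝ) : ℂ) ^ (α - 1)) := by
  obtain ⟨hu0, hu1⟩ := hu
  have h1 : (t * u ^ (1/σ)) ^ σ = t ^ σ * u := by
    rw [Real.mul_rpow ht.le (Real.rpow_nonneg hu0.le _), ← Real.rpow_mul hu0.le,
      one_div_mul_cancel hσ.ne', Real.rpow_one]
  have habs : |t * (1/σ * u ^ (1/σ - 1))| = t * (1/σ * u ^ (1/σ - 1)) :=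
    abs_of_pos (by positivity)
  have h2 : t ^ σ - t ^ σ * u = t ^ σ * (1 - u) := by ring
  have e1 : ((t * u ^ (1/σ) : ℝ) : ℂ) ^ (p - 1)
      = (t : ℂ) ^ (p - 1) * (u : ℂ) ^ (((1/σ : ℝ) : ℂ) * (p - 1)) := by
    rw [Complex.ofReal_mul, Complex.mul_cpow_ofReal_nonneg ht.le (Real.rpow_nonneg hu0.le _),
      Complex.cpow_mul_ofReal_nonneg hu0.le]
  have e2 : ((t ^ σ * (1 - u) : ℝ) : ℂ) ^ (α - 1)
      = ((t ^ σ : ℝ) : ℂ) ^ (α - 1) * ((1 - u : ℝ) : ℂ) ^ (α - 1) := by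
    rw [Complex.ofReal_mul,
      Complex.mul_cpow_ofReal_nonneg (Real.rpow_nonneg ht.le _) (by linarith)]
  rw [habs, h1, h2, Complex.real_smul, e1, e2]
  have e3 : ((t * (1/σ * u ^ (1/σ - 1)) : ℝ) : ℂ)
      = ((t/σ : ℝ) : ℂ) * (u : ℂ) ^ (((1/σ - 1 : ℝ)) : ℂ) := by
    rw [← Complex.ofReal_cpow hu0.le]
    push_cast
    ring
  rw [e3]
  have e4 : (u : ℂ) ^ (((1/σ - 1 : ℝ)) : ℂ) * ((u : ℂ) ^ (((1/σ : ℝ) : ℂ) * (p - 1)))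
      = (u : ℂ) ^ (p/(σ:ℂ) - 1) := by
    rw [← Complex.cpow_add _ _ (by exact_mod_cast hu0.ne')]
    congr 1
    have hσc : (σ : ℂ) ≠ 0 := by exact_mod_cast hσ.ne'
    push_cast
    field_simp
    ring
  rw [← e4]
  ring

noncomputable def xker (σ t : ℝ) (p α : ℂ) : ℝ → ℂ :=
  fun x => (x : ℂ) ^ (p - 1) * ((t ^ σ - x ^ σ : ℝ) : ℂ) ^ (α - 1)

noncomputable def bker (σ : ℝ) (p α : ℂ) : ℝ → ℂ :=
  fun u => (u : ℂ) ^ (p/(σ:ℂ) - 1) * ((1 - u : ℝ) : ℂ) ^ (α - 1)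

noncomputable def Ct (σ t : ℝ) (p α : ℂ) : ℂ :=
  ((t/σ : ℝ) : ℂ) * (t : ℂ) ^ (p - 1) * ((t ^ σ : ℝ) : ℂ) ^ (α - 1)

lemma inner_value (σ t : ℝ) (hσ : 0 < σ) (ht : 0 < t) (p α : ℂ) :
    ∫ x in Ioo 0 t, xker σ t p α x
      = Ct σ t p α * ∫ u in Ioo (0:ℝ) 1, bker σ p α u := by
  rw [subst_eq σ t hσ ht (xker σ t p α), ← integral_const_mul]
  refine setIntegral_congr_fun measurableSet_Ioo (fun u hu => ?_)
  exact key_simp σ t hσ ht p α hu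

lemma inner_norm (σ t : ℝ) (hσ : 0 < σ) (ht : 0 < t) (p α : ℂ) :
    ∫ x in Ioo 0 t, ‖xker σ t p α x‖
      = ‖Ct σ t p α‖ * ∫ u in Ioo (0:ℝ) 1, ‖bker σ p α u‖ := by
  rw [subst_eq σ t hσ ht (fun x => ‖xker σ t p α x‖), ← integral_const_mul]
  refine setIntegral_congr_fun measurableSet_Ioo (fun u hu => ?_)
  have := key_simp σ t hσ ht p α hu
  calc |t * (1/σ * u ^ (1/σ - 1))| • ‖xker σ t p α (t * u ^ (1/σ))‖
      = ‖|t * (1/σ * u ^ (1/σ - 1))| • xker σ t p α (t * u ^ (1/σ))‖ := by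
        rw [norm_smul, Real.norm_eq_abs, abs_abs]; rfl
    _ = ‖Ct σ t p α * bker σ p α u‖ := by rw [show |t * (1/σ * u ^ (1/σ - 1))| •
          xker σ t p α (t * u ^ (1/σ)) = Ct σ t p α * bker σ p α u from this]
    _ = ‖Ct σ t p α‖ * ‖bker σ p α u‖ := norm_mul _ _

lemma inner_integrable (σ t : ℝ) (hσ : 0 < σ) (ht : 0 < t) (p α : ℂ)
    (hp : 0 < p.re) (hα : 0 < α.re) :
    IntegrableOn (xker σ t p α) (Ioo 0 t) := by
  rw [subst_int σ t hσ ht]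
  have hb : IntegrableOn (bker σ p α) (Ioo (0:ℝ) 1) := by
    have h1 : 0 < (p/(σ:ℂ)).re := by
      rw [Complex.div_re]
      simp [Complex.normSq_ofReal]
      positivity
    have := Complex.betaIntegral_convergent h1 hα
    rw [intervalIntegrable_iff_integrableOn_Ioc_of_le zero_le_one] at this
    refine (this.mono_set Ioo_subset_Ioc_self).congr_fun (fun u hu => ?_) measurableSet_Ioo
    unfold bker
    push_cast
    ring
  refine IntegrableOn.congr_fun (hb.const_mul (Ct σ t p α)) (fun u hu => ?_) measurableSet_Ioo
  exact (key_simp σ t hσ ht p α hu).symm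

lemma bker_integral (σ : ℝ) (p α : ℂ) :
    ∫ u in Ioo (0:ℝ) 1, bker σ p α u = Complex.betaIntegral (p/(σ:ℂ)) α := by
  rw [Complex.betaIntegral, intervalIntegral.integral_of_le zero_le_one,
    ← integral_Ioc_eq_integral_Ioo]
  refine setIntegral_congr_fun measurableSet_Ioc (fun u hu => ?_)
  unfold bker
  push_cast
  ring

lemma beta_ratio (α w : ℂ) (hα : 0 < α.re) (hw : 0 < w.re) :
    Complex.betaIntegral w α / Complex.Gamma α
      = Complex.Gamma w / Complex.Gamma (w + α) := by
  have h := Complex.Gamma_mul_Gamma_eq_betaIntegral hw hα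
  have h1 : Complex.Gamma α ≠ 0 := Complex.Gamma_ne_zero_of_re_pos hα
  have h2 : Complex.Gamma (w + α) ≠ 0 := by
    refine Complex.Gamma_ne_zero_of_re_pos ?_
    rw [Complex.add_re]; positivity
  rw [div_eq_div_iff h1 h2]
  linear_combination -h

/-- Mellin transform of the Erdélyi–Kober operator I^α_{−;σ,η}:
(𝔐 I^α_{−;σ,η} f)(s) = [Γ(η + s/σ)/Γ(η + α + s/σ)] (𝔐 f)(s)
for Re(s) = ν > −σ Re(η). -/
theorem stmt10 (σ ν : ℝ) (α η : ℂ) (hσ : 0 < σ) (hα : 0 < α.re)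
    (f : ℝ → ℂ) (hcont : Continuous f) (hsupp : HasCompactSupport f)
    (hpos : tsupport f ⊆ Set.Ioi 0)
    (hν : -σ * η.re < ν) :
    ∀ s : ℂ, s.re = ν →
      MellinT (EKm σ α η f) s =
        Complex.Gamma (η + s / (σ : ℂ)) / Complex.Gamma (η + α + s / (σ : ℂ)) *
          MellinT f s := by

  intro s hs
  have hσc : (σ : ℂ) ≠ 0 := Complex.ofReal_ne_zero.mpr hσ.ne'
  have hΓα : Complex.Gamma α ≠ 0 := Complex.Gamma_ne_zero_of_re_pos hα
  set p : ℂ := (σ:ℂ) * η + s with hpdef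
  set q : ℂ := (σ:ℂ) * (1 - α - η) - 1 with hqdef
  have hp : 0 < p.re := by
    have : p.re = σ * η.re + ν := by
      rw [hpdef]
      simp [Complex.add_re, Complex.mul_re, hs]
    rw [this]; linarith
  have hw : 0 < (p / (σ:ℂ)).re := by
    rw [Complex.div_re]
    simp [Complex.normSq_ofReal]
    positivity
  have hweq : p / (σ:ℂ) = η + s / (σ:ℂ) := by
    rw [hpdef]; field_simp
  -- the kernel as a function on the product space
  set A : Set (ℝ × ℝ) := {z : ℝ × ℝ | 0 < z.1 ∧ z.1 < z.2} with hAdef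
  have hA : MeasurableSet A := by
    exact (measurableSet_lt measurable_const measurable_fst).inter
      (measurableSet_lt measurable_fst measurable_snd)
  set H : ℝ × ℝ → ℂ :=
    A.indicator (fun z => xker σ z.2 p α z.1 * ((z.2:ℂ)^q * f z.2)) with hHdef
  -- measurability
  have hHmeas : AEStronglyMeasurable H (volume.prod volume) := by
    rw [hHdef, aestronglyMeasurable_indicator_iff hA]
    refine ContinuousOn.aestronglyMeasurable ?_ hA
    intro z hz
    obtain ⟨hz1, hz2⟩ := hz
    have hz2' : (0:ℝ) < z.2 := lt_trans hz1 hz2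
    have hd : (0:ℝ) < z.2 ^ σ - z.1 ^ σ :=
      sub_pos.mpr (Real.rpow_lt_rpow hz1.le hz2 hσ)
    have c1 : ContinuousAt (fun z : ℝ × ℝ => (z.1 : ℂ) ^ (p - 1)) z :=
      ContinuousAt.comp (Complex.continuousAt_ofReal_cpow_const z.1 (p-1) (Or.inr hz1.ne'))
        continuous_fst.continuousAt
    have c2 : ContinuousAt (fun z : ℝ × ℝ => ((z.2 ^ σ - z.1 ^ σ : ℝ) : ℂ) ^ (α - 1)) z := by
      have cin : ContinuousAt (fun z : ℝ × ℝ => z.2 ^ σ - z.1 ^ σ) z :=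
        ((Real.continuousAt_rpow_const z.2 σ (Or.inl hz2'.ne')).comp
            continuous_snd.continuousAt).sub
          ((Real.continuousAt_rpow_const z.1 σ (Or.inl hz1.ne')).comp
            continuous_fst.continuousAt)
      exact ContinuousAt.comp (x := z) (f := fun z : ℝ × ℝ => z.2 ^ σ - z.1 ^ σ)
        (Complex.continuousAt_ofReal_cpow_const _ (α-1) (Or.inr hd.ne')) cin
    have c3 : ContinuousAt (fun z : ℝ × ℝ => (z.2 : ℂ) ^ q) z :=
      ContinuousAt.comp (Complex.continuousAt_ofReal_cpow_const z.2 q (Or.inr hz2'.ne'))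
        continuous_snd.continuousAt
    have c4 : ContinuousAt (fun z : ℝ × ℝ => f z.2) z :=
      (hcont.comp continuous_snd).continuousAt
    exact (((c1.mul c2).mul (c3.mul c4)).continuousWithinAt)
  -- fiberwise description
  have claim2 : ∀ x t : ℝ, H (x, t)
      = (Ioo (0:ℝ) t).indicator (fun x => xker σ t p α x * ((t:ℂ)^q * f t)) x := by
    intro x t
    simp [hHdef, Set.indicator_apply, hAdef, Set.mem_Ioo, Set.mem_setOf_eq]
  have claim1 : ∀ x : ℝ, (Ioi (0:ℝ)).indicator
      (fun x => ∫ t in Ioi x, xker σ t p α x * ((t:ℂ)^q * f t)) x = ∫ t, H (x, t) := by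
    intro x
    by_cases hx : 0 < x
    · rw [Set.indicator_of_mem (mem_Ioi.mpr hx), ← integral_indicator measurableSet_Ioi]
      congr 1
      funext t
      by_cases ht : x < t
      · rw [Set.indicator_of_mem (mem_Ioi.mpr ht), hHdef,
          Set.indicator_of_mem (show (x,t) ∈ A from ⟨hx, ht⟩)]
      · rw [Set.indicator_of_notMem (by simpa using ht), hHdef,
          Set.indicator_of_notMem (fun hmem => ht hmem.2)]
    · rw [Set.indicator_of_notMem (by simpa using hx)]
      have hz : ∀ t, H (x, t) = 0 := fun t =>
        Set.indicator_of_notMem (fun hmem => hx hmem.1) _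
      simp [hz]
  -- fiberwise integrability
  have fiber : ∀ t : ℝ, Integrable (fun x => H (x, t)) volume := by
    intro t
    simp only [claim2]
    rw [integrable_indicator_iff measurableSet_Ioo]
    by_cases hft : f t = 0
    · simp only [hft, mul_zero]
      exact integrableOn_zero
    · have ht : (0:ℝ) < t := hpos (subset_tsupport f (Function.mem_support.mpr hft))
      exact (inner_integrable σ t hσ ht p α hp hα).mul_const _
  -- the iterated norm integral
  set Breal : ℝ := ∫ u in Ioo (0:ℝ) 1, ‖bker σ p α u‖ with hBreal
  set W : ℝ → ℝ := fun t => ‖f t‖ * (‖Ct σ t p α * (t:ℂ)^q‖ * Breal) with hWdef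
  have normfun : ∀ t : ℝ, (∫ x, ‖H (x, t)‖) = (tsupport f).indicator W t := by
    intro t
    by_cases hK : t ∈ tsupport f
    · have ht : (0:ℝ) < t := hpos hK
      rw [Set.indicator_of_mem hK]
      have hnorm : ∀ x : ℝ, ‖H (x,t)‖
          = (Ioo (0:ℝ) t).indicator
              (fun x => ‖xker σ t p α x * ((t:ℂ)^q * f t)‖) x := by
        intro x; rw [claim2]; exact norm_indicator_eq_indicator_norm _ _
      simp only [hnorm]
      rw [integral_indicator measurableSet_Ioo]
      calc ∫ x in Ioo (0:ℝ) t, ‖xker σ t p α x * ((t:ℂ)^q * f t)‖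
          = ∫ x in Ioo (0:ℝ) t, ‖xker σ t p α x‖ * ‖(t:ℂ)^q * f t‖ := by
            simp only [norm_mul]
        _ = (∫ x in Ioo (0:ℝ) t, ‖xker σ t p α x‖) * ‖(t:ℂ)^q * f t‖ :=
            integral_mul_const _ _
        _ = ‖Ct σ t p α‖ * Breal * ‖(t:ℂ)^q * f t‖ := by
            rw [inner_norm σ t hσ ht p α]
        _ = W t := by simp only [hWdef, norm_mul]; ring
    · rw [Set.indicator_of_notMem hK]
      have hft : f t = 0 := image_eq_zero_of_notMem_tsupport hK
      have hz : ∀ x : ℝ, H (x,t) = 0 := by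
        intro x; rw [claim2]; simp [hft]
      simp [hz]
  have normint : Integrable (fun t => ∫ x, ‖H (x, t)‖) volume := by
    rw [show (fun t => ∫ x, ‖H (x, t)‖) = (tsupport f).indicator W from funext normfun]
    rw [integrable_indicator_iff (isClosed_tsupport f).measurableSet]
    refine ContinuousOn.integrableOn_compact hsupp ?_
    intro t htK
    have ht : (0:ℝ) < t := hpos htK
    refine ContinuousAt.continuousWithinAt ?_
    have cC : ContinuousAt (fun t : ℝ => ‖Ct σ t p α * (t:ℂ)^q‖) t := by
      refine ContinuousAt.norm ?_
      have c1 : ContinuousAt (fun t : ℝ => ((t/σ : ℝ):ℂ)) t :=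
        (Complex.continuous_ofReal.comp (continuous_id.div_const σ)).continuousAt
      have c2 : ContinuousAt (fun t : ℝ => (t:ℂ)^(p-1)) t :=
        Complex.continuousAt_ofReal_cpow_const t (p-1) (Or.inr ht.ne')
      have c3 : ContinuousAt (fun t : ℝ => ((t^σ : ℝ):ℂ)^(α-1)) t := by
        exact ContinuousAt.comp (x := t) (f := fun t : ℝ => t ^ σ)
          (Complex.continuousAt_ofReal_cpow_const (t^σ) (α-1)
            (Or.inr (Real.rpow_pos_of_pos ht σ).ne'))
          (Real.continuousAt_rpow_const t σ (Or.inl ht.ne'))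
      have c4 : ContinuousAt (fun t : ℝ => (t:ℂ)^q) t :=
        Complex.continuousAt_ofReal_cpow_const t q (Or.inr ht.ne')
      simp only [Ct]
      exact ((c1.mul c2).mul c3).mul c4
    exact (hcont.norm.continuousAt).mul (cC.mul continuousAt_const)
  -- Fubini
  have hH : Integrable H (volume.prod volume) := by
    rw [integrable_prod_iff' hHmeas]
    exact ⟨Filter.Eventually.of_forall fiber, normint⟩
  have fub : (∫ x : ℝ, ∫ t : ℝ, H (x, t)) = ∫ t : ℝ, ∫ x : ℝ, H (x, t) :=
    integral_integral_swap (f := fun x t => H (x, t)) hH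
  -- swap the iterated integrals
  have key : (∫ x in Ioi (0:ℝ), ∫ t in Ioi x, xker σ t p α x * ((t:ℂ)^q * f t))
      = ∫ t in Ioi (0:ℝ), (∫ x in Ioo (0:ℝ) t, xker σ t p α x) * ((t:ℂ)^q * f t) := by
    rw [← integral_indicator measurableSet_Ioi]
    simp only [claim1]
    rw [fub]
    simp only [claim2]
    simp only [integral_indicator measurableSet_Ioo]
    have hmr : ∀ t : ℝ, (∫ x in Ioo (0:ℝ) t, xker σ t p α x * ((t:ℂ)^q * f t))
        = (∫ x in Ioo (0:ℝ) t, xker σ t p α x) * ((t:ℂ)^q * f t) :=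
      fun t => integral_mul_const _ _
    simp only [hmr]
    rw [← integral_indicator measurableSet_Ioi]
    congr 1
    funext t
    by_cases ht : 0 < t
    · rw [Set.indicator_of_mem (mem_Ioi.mpr ht)]
    · rw [Set.indicator_of_notMem (by simpa using ht), Set.Ioo_eq_empty (by simpa using ht),
        Measure.restrict_empty, integral_zero_measure, zero_mul]
  -- step A : unfold the Mellin transform of EKm
  have stepA : MellinT (EKm σ α η f) s
      = (σ:ℂ)/Complex.Gamma α
          * ∫ x in Ioi (0:ℝ), ∫ t in Ioi x, xker σ t p α x * ((t:ℂ)^q * f t) := by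
    rw [MellinT, ← integral_const_mul]
    refine setIntegral_congr_fun measurableSet_Ioi (fun x hx => ?_)
    have hx' : (0:ℝ) < x := hx
    have hx0 : (x:ℂ) ≠ 0 := Complex.ofReal_ne_zero.mpr hx'.ne'
    have hxpow : (x:ℂ)^((σ:ℂ)*η) * (x:ℂ)^(s-1) = (x:ℂ)^(p-1) := by
      rw [← Complex.cpow_add _ _ hx0]
      congr 1
      rw [hpdef]; ring
    simp only [EKm, xker]
    rw [show ((σ:ℂ) * (x:ℂ)^((σ:ℂ)*η) / Complex.Gamma α *
          (∫ t in Ioi x, ((t^σ - x^σ : ℝ):ℂ)^(α-1) * (t:ℂ)^((σ:ℂ)*(1-α-η)-1) * f t))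
            * (x:ℂ)^(s-1)
        = ((σ:ℂ) * ((x:ℂ)^((σ:ℂ)*η) * (x:ℂ)^(s-1)) / Complex.Gamma α) *
          (∫ t in Ioi x, ((t^σ - x^σ : ℝ):ℂ)^(α-1) * (t:ℂ)^((σ:ℂ)*(1-α-η)-1) * f t) from by
        ring]
    rw [hxpow, ← integral_const_mul, ← integral_const_mul]
    refine setIntegral_congr_fun measurableSet_Ioi (fun t htx => ?_)
    rw [← hqdef]
    ring
  -- step C : evaluate the inner integral
  set B : ℂ := Complex.betaIntegral (p/(σ:ℂ)) α with hBdef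
  have stepC : (∫ t in Ioi (0:ℝ), (∫ x in Ioo (0:ℝ) t, xker σ t p α x) * ((t:ℂ)^q * f t))
      = B/(σ:ℂ) * MellinT f s := by
    rw [MellinT, ← integral_const_mul]
    refine setIntegral_congr_fun measurableSet_Ioi (fun t ht => ?_)
    have ht' : (0:ℝ) < t := ht
    have ht0 : (t:ℂ) ≠ 0 := Complex.ofReal_ne_zero.mpr ht'.ne'
    rw [inner_value σ t hσ ht' p α, bker_integral σ p α, ← hBdef]
    have e5 : ((t^σ : ℝ):ℂ)^(α-1) = (t:ℂ)^((σ:ℂ)*(α-1)) :=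
      (Complex.cpow_mul_ofReal_nonneg ht'.le σ (α-1)).symm
    have ecoe : ((t/σ : ℝ):ℂ) = (t:ℂ)/(σ:ℂ) := by push_cast; ring
    have epow : (t:ℂ) * ((t:ℂ)^(p-1) * ((t:ℂ)^((σ:ℂ)*(α-1)) * (t:ℂ)^q)) = (t:ℂ)^(s-1) := by
      have : (t:ℂ)^(s-1) = (t:ℂ)^((1 + ((p-1) + ((σ:ℂ)*(α-1) + q)))) := by
        congr 1
        rw [hpdef, hqdef]; ring
      rw [this, Complex.cpow_add _ _ ht0, Complex.cpow_add _ _ ht0,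
        Complex.cpow_add _ _ ht0, Complex.cpow_one]
    simp only [Ct]
    rw [e5, ecoe, ← epow]
    field_simp
  -- conclude
  rw [stepA, key, stepC]
  have halg : (σ:ℂ)/Complex.Gamma α * (B/(σ:ℂ) * MellinT f s)
      = B/Complex.Gamma α * MellinT f s := by
    field_simp
  rw [halg, hBdef, beta_ratio α (p/(σ:ℂ)) hα hw]
  have hw2 : p/(σ:ℂ) + α = η + α + s/(σ:ℂ) := by rw [hweq]; ring
  rw [hw2, hweq]
end

section
/- Let κ ≠ 0 be real, α ∈ ℂ, and f a continuous function with compact support in (0,∞). If κ > 0 and Re(s) > Re(α) (respectively κ < 0 and Re(s) < Re(α)), then the modified Laplace transform (L_{κ,α} f)(x) = ∫₀^∞ (xt)^{−α} e^{−|κ|(xt)^{1/κ}} f(t) dt satisfies (𝔐 L_{κ,α} f)(s) = Γ(κ(s − α)) |κ|^{1−κ(s−α)} (𝔐 f)(1 − s). -/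
open MeasureTheory Set

/-- The modified Laplace transform
(L_{κ,α} f)(x) = ∫₀^∞ (xt)^{−α} e^{−|κ|(xt)^{1/κ}} f(t) dt. -/
noncomputable def LaplaceT (κ : ℝ) (α : ℂ) (f : ℝ → ℂ) : ℝ → ℂ := fun x =>
  ∫ t in Set.Ioi (0 : ℝ),
    ((x * t : ℝ) : ℂ) ^ (-α) * Complex.exp (-((|κ| * (x * t) ^ (1 / κ) : ℝ) : ℂ)) * f t

lemma hasMellinK (κ : ℝ) (α : ℂ) (hκ : κ ≠ 0) (s : ℂ)
    (hw : 0 < ((κ : ℂ) * (s - α)).re) :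
    HasMellin (fun u : ℝ => (u : ℂ) ^ (-α) *
        Complex.exp (-((|κ| * u ^ (1 / κ) : ℝ) : ℂ))) s
      (Complex.Gamma ((κ : ℂ) * (s - α)) *
        ((|κ| : ℝ) : ℂ) ^ (1 - (κ : ℂ) * (s - α))) := by
  set w : ℂ := (κ : ℂ) * (s - α) with hwdef
  set c : ℝ := |κ| with hcdef
  have hc : 0 < c := abs_pos.mpr hκ
  have h1κ : (1 : ℝ) / κ ≠ 0 := one_div_ne_zero hκ
  set g : ℝ → ℂ := fun v => Complex.exp (-((c * v : ℝ) : ℂ)) with hg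
  -- convergence of the plain exponential
  have hE : MellinConvergent (fun v : ℝ => Complex.exp (-(v : ℂ))) w := by
    have h0 := Complex.GammaIntegral_convergent hw
    refine h0.congr_fun (fun x _ => ?_) measurableSet_Ioi
    simp [smul_eq_mul, Complex.ofReal_exp, mul_comm]
  have hgconv : MellinConvergent g w :=
    (MellinConvergent.comp_mul_left (f := fun v : ℝ => Complex.exp (-(v : ℂ))) (s := w) hc).mpr hE
  have hgval : mellin g w = (1 / (c : ℂ)) ^ w * Complex.Gamma w := by
    have hpt : ∀ t : ℝ, (t : ℂ) ^ (w - 1) • g t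
        = (t : ℂ) ^ (w - 1) * Complex.exp (-((c : ℂ) * (t : ℂ))) := by
      intro t; simp [hg, smul_eq_mul]
    simp only [mellin, hpt]
    exact Complex.integral_cpow_mul_exp_neg_mul_Ioi hw hc
  have harg : (s - α) / ((1 / κ : ℝ) : ℂ) = w := by
    push_cast
    rw [div_eq_mul_inv, one_div, inv_inv, mul_comm]
  have h2conv : MellinConvergent (fun u : ℝ => g (u ^ (1 / κ))) (s - α) := by
    refine (MellinConvergent.comp_rpow h1κ).mpr ?_
    rw [harg]; exact hgconv
  have h2val : mellin (fun u : ℝ => g (u ^ (1 / κ))) (s - α) = (c : ℂ) * mellin g w := by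
    rw [mellin_comp_rpow, harg]
    have : |1 / κ|⁻¹ = c := by rw [abs_div, abs_one, one_div, inv_inv]
    rw [this, Complex.real_smul]
  constructor
  · have h3 := (MellinConvergent.cpow_smul
      (f := fun u : ℝ => g (u ^ (1 / κ))) (s := s) (a := -α)).mpr
      (by rw [← sub_eq_add_neg]; exact h2conv)
    exact h3.congr_fun (fun u _ => by simp only [smul_eq_mul, hg]) measurableSet_Ioi
  · have h3 : mellin (fun u : ℝ => (u : ℂ) ^ (-α) *
        Complex.exp (-((c * u ^ (1 / κ) : ℝ) : ℂ))) s
        = mellin (fun u : ℝ => g (u ^ (1 / κ))) (s + -α) := by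
      rw [← mellin_cpow_smul]
      refine setIntegral_congr_fun measurableSet_Ioi fun u _ => ?_
      simp [hg, smul_eq_mul]
    rw [h3, ← sub_eq_add_neg, h2val, hgval]
    have hcne : (c : ℂ) ≠ 0 := Complex.ofReal_ne_zero.mpr hc.ne'
    have harg2 : (c : ℂ).arg ≠ Real.pi := by
      rw [Complex.arg_ofReal_of_nonneg hc.le]; exact Real.pi_ne_zero.symm
    rw [one_div, Complex.inv_cpow _ _ harg2, sub_eq_add_neg (1 : ℂ) w,
      Complex.cpow_add _ _ hcne, Complex.cpow_one, Complex.cpow_neg]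
    ring

/-- Mellin transform of the modified Laplace transform:
(𝔐 L_{κ,α} f)(s) = Γ(κ(s − α)) |κ|^{1−κ(s−α)} (𝔐 f)(1 − s),
valid for κ > 0, Re(s) > Re(α), or κ < 0, Re(s) < Re(α). -/
theorem stmt11 (κ : ℝ) (α : ℂ) (hκ : κ ≠ 0)
    (f : ℝ → ℂ) (hcont : Continuous f) (hsupp : HasCompactSupport f)
    (hpos : tsupport f ⊆ Set.Ioi 0) :
    ∀ s : ℂ, (0 < κ ∧ α.re < s.re) ∨ (κ < 0 ∧ s.re < α.re) →
      MellinT (LaplaceT κ α f) s =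
        Complex.Gamma ((κ : ℂ) * (s - α)) *
          ((|κ| : ℝ) : ℂ) ^ (1 - (κ : ℂ) * (s - α)) * MellinT f (1 - s) := by
  intro s hs
  have hw : 0 < ((κ : ℂ) * (s - α)).re := by
    have h1 : ((κ : ℂ) * (s - α)).re = κ * (s.re - α.re) := by
      rw [Complex.re_ofReal_mul, Complex.sub_re]
    rw [h1]
    rcases hs with ⟨hk, hsα⟩ | ⟨hk, hsα⟩
    · exact mul_pos hk (by linarith)
    · exact mul_pos_of_neg_of_neg hk (by linarith)
  set K : ℝ → ℂ := fun u => (u : ℂ) ^ (-α) *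
      Complex.exp (-((|κ| * u ^ (1 / κ) : ℝ) : ℂ)) with hKdef
  obtain ⟨hKconv, hKval⟩ := hasMellinK κ α hκ s hw
  set C : ℂ := Complex.Gamma ((κ : ℂ) * (s - α)) *
      ((|κ| : ℝ) : ℂ) ^ (1 - (κ : ℂ) * (s - α)) with hCdef
  set μ : Measure ℝ := volume.restrict (Set.Ioi 0) with hμ
  set F : ℝ → ℝ → ℂ := fun x t => K (x * t) * f t * (x : ℂ) ^ (s - 1) with hF
  -- continuity facts
  have hcpow : ∀ β : ℂ, ContinuousOn (fun u : ℝ => (u : ℂ) ^ β) (Set.Ioi 0) := by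
    intro β
    refine continuousOn_of_forall_continuousAt fun u hu => ?_
    exact (continuousAt_cpow_const (Complex.ofReal_mem_slitPlane.2 hu)).comp
      Complex.continuous_ofReal.continuousAt
  have hKcont : ContinuousOn K (Set.Ioi 0) := by
    refine (hcpow (-α)).mul ?_
    refine Complex.continuous_exp.comp_continuousOn ?_
    refine ContinuousOn.neg (Complex.continuous_ofReal.comp_continuousOn ?_)
    exact continuousOn_const.mul (continuousOn_id.rpow_const fun u hu => Or.inl (ne_of_gt hu))
  -- measurability of F on the product
  have hFm : AEStronglyMeasurable (fun p : ℝ × ℝ => F p.1 p.2) (μ.prod μ) := by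
    rw [hμ, Measure.prod_restrict]
    refine ContinuousOn.aestronglyMeasurable ?_ (measurableSet_Ioi.prod measurableSet_Ioi)
    have hmul : ContinuousOn (fun p : ℝ × ℝ => p.1 * p.2) (Set.Ioi 0 ×ˢ Set.Ioi 0) :=
      (continuous_fst.mul continuous_snd).continuousOn
    have hmaps : MapsTo (fun p : ℝ × ℝ => p.1 * p.2) (Set.Ioi 0 ×ˢ Set.Ioi 0) (Set.Ioi 0) :=
      fun p hp => show 0 < p.1 * p.2 from mul_pos hp.1 hp.2
    refine ((hKcont.comp hmul hmaps).mul (hcont.comp continuous_snd).continuousOn).mul ?_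
    exact (hcpow (s - 1)).comp continuous_fst.continuousOn fun p hp => hp.1
  -- sections in x are integrable
  have hb : ∀ t ∈ Set.Ioi (0 : ℝ), Integrable (fun x => F x t) μ := by
    intro t ht
    have h1 : Integrable (fun x : ℝ => (x : ℂ) ^ (s - 1) • K (t * x)) μ :=
      (MellinConvergent.comp_mul_left (f := K) (s := s) ht).mpr hKconv
    refine (h1.mul_const (f t)).congr (Filter.EventuallyEq.of_eq ?_)
    funext x
    show (x : ℂ) ^ (s - 1) • K (t * x) * f t = K (x * t) * f t * (x : ℂ) ^ (s - 1)
    rw [smul_eq_mul, mul_comm t x]; ring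
  -- the iterated norm integral
  set G : ℝ → ℝ := fun u => ‖(u : ℂ) ^ (s - 1) • K u‖ with hG
  set D : ℝ := ∫ u in Set.Ioi (0 : ℝ), G u with hD
  have hnorm_eq : ∀ t ∈ Set.Ioi (0 : ℝ),
      (∫ x, ‖F x t‖ ∂μ) = ‖f t‖ * (t ^ (-s.re) * D) := by
    intro t ht
    have ht0 : t ≠ 0 := ne_of_gt ht
    have e1 : t ^ (-s.re) * t ^ (s.re - 1) = t⁻¹ := by
      rw [← Real.rpow_add ht, show -s.re + (s.re - 1) = -1 by ring, Real.rpow_neg_one]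
    have h1 : ∀ x ∈ Set.Ioi (0 : ℝ),
        ‖F x t‖ = (‖f t‖ * (t ^ (-s.re) * t)) * G (x * t) := by
      intro x hx
      have hxt : 0 < x * t := mul_pos hx ht
      have hnx : ‖(x : ℂ) ^ (s - 1)‖ = x ^ (s.re - 1) := by
        rw [Complex.norm_cpow_eq_rpow_re_of_pos hx, Complex.sub_re,
          Complex.one_re]
      have hnxt : ‖((x * t : ℝ) : ℂ) ^ (s - 1)‖ = (x * t) ^ (s.re - 1) := by
        rw [Complex.norm_cpow_eq_rpow_re_of_pos hxt, Complex.sub_re,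
          Complex.one_re]
      have : G (x * t) = (x * t) ^ (s.re - 1) * ‖K (x * t)‖ := by
        rw [hG]; dsimp only; rw [norm_smul, hnxt]
      rw [hF]; dsimp only
      rw [norm_mul, norm_mul, hnx, this, Real.mul_rpow hx.le ht.le]
      have : ‖f t‖ * (t ^ (-s.re) * t) * (x ^ (s.re - 1) * t ^ (s.re - 1) * ‖K (x * t)‖)
          = (t ^ (-s.re) * t ^ (s.re - 1) * t) * (‖K (x * t)‖ * ‖f t‖ * x ^ (s.re - 1)) := by
        ring
      rw [this, e1, inv_mul_cancel₀ ht0, one_mul]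
    calc (∫ x, ‖F x t‖ ∂μ)
        = ∫ x in Set.Ioi (0 : ℝ), (‖f t‖ * (t ^ (-s.re) * t)) * G (x * t) := by
          rw [hμ]; exact setIntegral_congr_fun measurableSet_Ioi h1
      _ = (‖f t‖ * (t ^ (-s.re) * t)) * ∫ x in Set.Ioi (0 : ℝ), G (x * t) :=
          integral_const_mul _ _
      _ = (‖f t‖ * (t ^ (-s.re) * t)) * (t⁻¹ * D) := by
          rw [integral_comp_mul_right_Ioi G 0 ht, zero_mul, smul_eq_mul, hD]
      _ = ‖f t‖ * (t ^ (-s.re) * D) := by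
          field_simp
  have hcInt : Integrable (fun t => ∫ x, ‖F x t‖ ∂μ) μ := by
    have hsub : Function.support (fun t : ℝ => ‖f t‖ * (t ^ (-s.re) * D)) ⊆ tsupport f := by
      intro t htne
      have : f t ≠ 0 := by
        intro h0; apply htne; simp [h0]
      exact subset_tsupport f this
    have hck : ContinuousOn (fun t : ℝ => ‖f t‖ * (t ^ (-s.re) * D)) (tsupport f) := by
      refine (hcont.norm.continuousOn).mul (ContinuousOn.mul ?_ continuousOn_const)
      exact continuousOn_id.rpow_const fun t htk => Or.inl (ne_of_gt (hpos htk))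
    have hik : IntegrableOn (fun t : ℝ => ‖f t‖ * (t ^ (-s.re) * D)) (tsupport f) :=
      hck.integrableOn_compact hsupp
    have hInt : Integrable (fun t : ℝ => ‖f t‖ * (t ^ (-s.re) * D)) :=
      (integrableOn_iff_integrable_of_support_subset hsub).mp hik
    refine (hInt.integrableOn (s := Set.Ioi 0)).congr ?_
    rw [hμ]
    filter_upwards [ae_restrict_mem measurableSet_Ioi] with t ht
    exact (hnorm_eq t ht).symm
  have hFint : Integrable (Function.uncurry F) (μ.prod μ) := by
    refine (integrable_prod_iff' hFm).mpr ⟨?_, hcInt⟩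
    rw [hμ]
    filter_upwards [ae_restrict_mem measurableSet_Ioi] with t ht
    exact hb t ht
  -- inner integral evaluation after swapping
  have hinner : ∀ t ∈ Set.Ioi (0 : ℝ),
      (∫ x in Set.Ioi (0 : ℝ), F x t) = C * (f t * (t : ℂ) ^ (1 - s - 1)) := by
    intro t ht
    have h1 : (∫ x in Set.Ioi (0 : ℝ), F x t)
        = (∫ x in Set.Ioi (0 : ℝ), (x : ℂ) ^ (s - 1) • K (t * x)) * f t := by
      rw [← integral_mul_const]
      refine setIntegral_congr_fun measurableSet_Ioi fun x _ => ?_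
      show F x t = (x : ℂ) ^ (s - 1) • K (t * x) * f t
      rw [smul_eq_mul, mul_comm t x, hF]; dsimp only; ring
    have h2 : (∫ x in Set.Ioi (0 : ℝ), (x : ℂ) ^ (s - 1) • K (t * x))
        = (t : ℂ) ^ (-s) • mellin K s := mellin_comp_mul_left K s ht
    rw [h1, h2, hKval, smul_eq_mul, show (1 : ℂ) - s - 1 = -s by ring]
    ring
  -- put everything together
  calc MellinT (LaplaceT κ α f) s
      = ∫ x in Set.Ioi (0 : ℝ), ∫ t in Set.Ioi (0 : ℝ), F x t := by
        refine setIntegral_congr_fun measurableSet_Ioi fun x _ => ?_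
        show LaplaceT κ α f x * (x : ℂ) ^ (s - 1) = _
        rw [LaplaceT, ← integral_mul_const]
    _ = ∫ t in Set.Ioi (0 : ℝ), ∫ x in Set.Ioi (0 : ℝ), F x t := by
        rw [← hμ]; exact integral_integral_swap hFint
    _ = ∫ t in Set.Ioi (0 : ℝ), C * (f t * (t : ℂ) ^ (1 - s - 1)) :=
        setIntegral_congr_fun measurableSet_Ioi hinner
    _ = C * ∫ t in Set.Ioi (0 : ℝ), f t * (t : ℂ) ^ (1 - s - 1) := integral_const_mul _ _
    _ = C * MellinT f (1 - s) := rfl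
end
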